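/- Let n ≥ 1 and define, for t > 0, p_n(0,t) = 2^n ∫₀^∞ ⋯ ∫₀^∞ (1/√(2π w₁)) · (exp(−w₁²/(2w₂))/√(2π w₂)) ⋯ (exp(−w_{n−1}²/(2w_n))/√(2π w_n)) · (exp(−w_n²/(2t))/√(2π t)) dw₁ ⋯ dw_n. Then p_n(0,t) = (2^{n − 1/2^{n+1}} / √π) · t^{−1/2^{n+1}} · Γ(−1/2) / Γ(−1/2^{n+1}). -/

import Mathlib

/-!
Every integrand is nonnegative, so the recursion can be run in `ℝ≥0∞`, where Tonelli lets the
nested integrals be taken in the opposite order: `p_{n+1}(0,t) = 2 ∫₀^∞ p_n(0,w) g(w,t) dw`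
with `g` the Gaussian kernel. By induction `p_n(0,t) = c_n t^{-a_n}` with `a_n = 2^{-(n+1)}`:
the Gaussian moment `∫₀^∞ w^s g(w,t) dw = (2t)^{s/2} Γ((s+1)/2) / (2√π)` halves the exponent,
and Legendre's duplication formula collapses the accumulated Gamma factors to
`Γ(-1/2) / Γ(-a_n)`. The `ℝ≥0∞` version is largest at `x = 0`, hence finite, so it agrees
with the real one.
-/

open Real MeasureTheory

/-- Density `p_n(x,t)` of the `n`-times iterated Brownian motion
`I_n(t) = B₁(|B₂(...|B_{n+1}(t)|...)|)`, defined through its nested-integral recursion: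
`p_0` is the standard Gaussian density and
`p_{n+1}(x,t) = 2 ∫₀^∞ (e^{−x²/(2w)}/√(2πw)) p_n(w,t) dw`, so that
`p_n(x,t) = 2^n ∫₀^∞⋯∫₀^∞ (e^{−x²/(2w₁)}/√(2πw₁)) (e^{−w₁²/(2w₂)}/√(2πw₂)) ⋯
(e^{−w_n²/(2t)}/√(2πt)) dw₁⋯dw_n`. -/
noncomputable def iterBMDensity : ℕ → ℝ → ℝ → ℝ
  | 0, x, t => Real.exp (-x ^ 2 / (2 * t)) / Real.sqrt (2 * π * t)
  | n + 1, x, t =>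
      2 * ∫ w in Set.Ioi (0 : ℝ),
        (Real.exp (-x ^ 2 / (2 * w)) / Real.sqrt (2 * π * w)) * iterBMDensity n w t

open Set Function
open scoped ENNReal

section IterKernel

variable {α : Type*} [MeasurableSpace α] (μ : Measure α) (k : α → α → ℝ≥0∞)

noncomputable def iterKernel : ℕ → α → α → ℝ≥0∞
  | 0 => k
  | n + 1 => fun x t => ∫⁻ w, k x w * iterKernel n w t ∂μ

variable {μ k}

theorem iterKernel_succ (n : ℕ) (x t : α) :
    iterKernel μ k (n + 1) x t = ∫⁻ w, k x w * iterKernel μ k n w t ∂μ := rfl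

theorem measurable_iterKernel [SFinite μ] (hk : Measurable (uncurry k)) (n : ℕ) :
    Measurable (uncurry (iterKernel μ k n)) := by
  induction n with
  | zero => exact hk
  | succ n ih =>
    exact ((hk.comp (measurable_fst.fst.prodMk measurable_snd)).mul
      (ih.comp (measurable_snd.prodMk measurable_fst.snd))).lintegral_prod_right'

theorem iterKernel_succ' [SFinite μ] (hk : Measurable (uncurry k)) (n : ℕ) (x t : α) :
    iterKernel μ k (n + 1) x t = ∫⁻ w, iterKernel μ k n x w * k w t ∂μ := by
  induction n generalizing x t with
  | zero => rfl
  | succ n ih =>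
    have hk_left : ∀ y, Measurable (k y) := fun y => hk.comp measurable_prodMk_left
    have hk_right : ∀ y, Measurable (k · y) := fun y => hk.comp measurable_prodMk_right
    have hiter := measurable_iterKernel (μ := μ) hk n
    calc iterKernel μ k (n + 2) x t
        = ∫⁻ w, ∫⁻ u, k x w * (iterKernel μ k n w u * k u t) ∂μ ∂μ := by
          refine lintegral_congr fun w => ?_
          rw [ih, lintegral_const_mul]
          exact (hiter.comp measurable_prodMk_left).mul (hk_right t)
      _ = ∫⁻ u, ∫⁻ w, k x w * (iterKernel μ k n w u * k u t) ∂μ ∂μ :=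
          lintegral_lintegral_swap (μ := μ) (ν := μ) (((hk_left x).comp measurable_fst).mul
            (hiter.mul ((hk_right t).comp measurable_snd))).aemeasurable
      _ = ∫⁻ u, iterKernel μ k (n + 1) x u * k u t ∂μ := by
          refine lintegral_congr fun u => ?_
          have hmeas : Measurable fun w => k x w * iterKernel μ k n w u :=
            (hk_left x).mul (hiter.comp measurable_prodMk_right)
          simp only [iterKernel_succ, ← lintegral_mul_const _ hmeas, mul_assoc]

theorem iterKernel_mono_left {x y : α} (h : ∀ w, k x w ≤ k y w) (n : ℕ) (t : α) :
    iterKernel μ k n x t ≤ iterKernel μ k n y t := by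
  cases n with
  | zero => exact h t
  | succ n => exact lintegral_mono fun w => mul_le_mul_left (h w) _

end IterKernel

noncomputable def gaussKernel (x t : ℝ) : ℝ := exp (-x ^ 2 / (2 * t)) / √(2 * π * t)

theorem gaussKernel_nonneg (x t : ℝ) : 0 ≤ gaussKernel x t := by
  unfold gaussKernel; positivity

theorem gaussKernel_le_gaussKernel_zero (x t : ℝ) : gaussKernel x t ≤ gaussKernel 0 t := by
  rcases le_or_gt t 0 with ht | ht
  -- for `t ≤ 0` both sides are junk `0`, since `√` of a nonpositive number is `0`
  · have hsqrt : √(2 * π * t) = 0 := sqrt_eq_zero'.2 (by nlinarith [pi_pos])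
    simp [gaussKernel, hsqrt]
  · refine div_le_div_of_nonneg_right (exp_le_exp.2 ?_) (sqrt_nonneg _)
    rw [zero_pow two_ne_zero, neg_zero, zero_div]
    exact div_nonpos_of_nonpos_of_nonneg (neg_nonpos.2 (sq_nonneg x)) (by positivity)

theorem measurable_gaussKernel : Measurable (uncurry gaussKernel) := by
  unfold gaussKernel; fun_prop

theorem gaussKernel_zero_left {t : ℝ} (ht : 0 ≤ t) :
    gaussKernel 0 t = (√(2 * π))⁻¹ * t ^ (-(1 / 2 : ℝ)) := by
  rw [gaussKernel, rpow_neg ht, ← sqrt_eq_rpow, sqrt_mul (by positivity), ← mul_inv]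
  simp

theorem gaussKernel_eq_mul_exp (x t : ℝ) :
    gaussKernel x t = (√(2 * π * t))⁻¹ * exp (-(2 * t)⁻¹ * x ^ 2) := by
  rw [gaussKernel, div_eq_inv_mul]
  ring_nf

theorem integrableOn_rpow_mul_gaussKernel {s t : ℝ} (hs : -1 < s) (ht : 0 < t) :
    IntegrableOn (fun w => w ^ s * gaussKernel w t) (Ioi 0) := by
  simp_rw [gaussKernel_eq_mul_exp, mul_left_comm _ (√(2 * π * t))⁻¹]
  exact (integrableOn_rpow_mul_exp_neg_mul_sq (by positivity) hs).const_mul _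

theorem integral_rpow_mul_gaussKernel {s t : ℝ} (hs : -1 < s) (ht : 0 < t) :
    ∫ w in Ioi 0, w ^ s * gaussKernel w t =
      (2 * t) ^ (s / 2) * Gamma ((s + 1) / 2) / (2 * √π) := by
  have h2t : 0 < 2 * t := by positivity
  simp_rw [gaussKernel_eq_mul_exp, mul_left_comm _ (√(2 * π * t))⁻¹, ← rpow_two]
  rw [integral_const_mul, integral_rpow_mul_exp_neg_mul_rpow two_pos hs (inv_pos.2 h2t),
    inv_rpow h2t.le, ← rpow_neg h2t.le, show 2 * π * t = 2 * t * π by ring,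
    sqrt_mul h2t.le, sqrt_eq_rpow, show -(-(s + 1) / 2) = s / 2 + 1 / 2 by ring, rpow_add h2t]
  have : (2 * t) ^ (1 / 2 : ℝ) ≠ 0 := (rpow_pos_of_pos h2t _).ne'
  field_simp

theorem lintegral_rpow_mul_gaussKernel {s t : ℝ} (hs : -1 < s) (ht : 0 < t) :
    ∫⁻ w in Ioi 0, ENNReal.ofReal (w ^ s * gaussKernel w t) =
      ENNReal.ofReal ((2 * t) ^ (s / 2) * Gamma ((s + 1) / 2) / (2 * √π)) := by
  rw [← integral_rpow_mul_gaussKernel hs ht, ofReal_integral_eq_lintegral_ofReal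
    (integrableOn_rpow_mul_gaussKernel hs ht)]
  exact (ae_restrict_iff' measurableSet_Ioi).2 (.of_forall fun w hw =>
    mul_nonneg (rpow_nonneg (le_of_lt hw) _) (gaussKernel_nonneg _ _))

theorem Real.Gamma_neg_of_neg_one_lt_of_neg {s : ℝ} (h1 : -1 < s) (h0 : s < 0) :
    Gamma s < 0 := by
  have hsucc : 0 < Gamma (s + 1) := Gamma_pos_of_pos (by linarith)
  rw [Gamma_add_one h0.ne] at hsucc
  exact neg_of_mul_pos_right hsucc h0.le

noncomputable def iterBMExponent (n : ℕ) : ℝ := 1 / 2 ^ (n + 1)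

noncomputable def iterBMConstant (n : ℕ) : ℝ :=
  2 ^ ((n : ℝ) - iterBMExponent n) / √π * (Gamma (-(1 / 2)) / Gamma (-iterBMExponent n))

theorem iterBMExponent_zero : iterBMExponent 0 = 1 / 2 := by
  norm_num [iterBMExponent]

theorem iterBMExponent_succ (n : ℕ) : iterBMExponent (n + 1) = iterBMExponent n / 2 := by
  rw [iterBMExponent, iterBMExponent, pow_succ, div_div]

theorem iterBMExponent_pos (n : ℕ) : 0 < iterBMExponent n := by
  unfold iterBMExponent; positivity

theorem iterBMExponent_lt_one (n : ℕ) : iterBMExponent n < 1 := by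
  rw [iterBMExponent, div_lt_one (by positivity)]
  exact one_lt_pow₀ one_lt_two n.succ_ne_zero

theorem Gamma_neg_iterBMExponent_lt_zero (n : ℕ) : Gamma (-iterBMExponent n) < 0 :=
  Gamma_neg_of_neg_one_lt_of_neg (neg_lt_neg (iterBMExponent_lt_one n))
    (neg_neg_of_pos (iterBMExponent_pos n))

theorem iterBMConstant_nonneg (n : ℕ) : 0 ≤ iterBMConstant n := by
  have hhalf : Gamma (-(1 / 2)) < 0 := Gamma_neg_of_neg_one_lt_of_neg (by norm_num) (by norm_num)
  have := div_pos_of_neg_of_neg hhalf (Gamma_neg_iterBMExponent_lt_zero n)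
  unfold iterBMConstant
  positivity

theorem iterBMConstant_zero : iterBMConstant 0 = (√(2 * π))⁻¹ := by
  have hhalf : Gamma (-(1 / 2)) ≠ 0 :=
    (Gamma_neg_of_neg_one_lt_of_neg (by norm_num) (by norm_num)).ne
  rw [iterBMConstant, iterBMExponent_zero, div_self hhalf, mul_one, Nat.cast_zero, zero_sub,
    rpow_neg two_pos.le, ← sqrt_eq_rpow, sqrt_mul two_pos.le, mul_inv, div_eq_mul_inv]

theorem iterBMConstant_succ (n : ℕ) :
    iterBMConstant (n + 1) = iterBMConstant n * 2 ^ (-iterBMExponent (n + 1)) *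
      Gamma (1 / 2 - iterBMExponent (n + 1)) / √π := by
  unfold iterBMConstant
  set b := iterBMExponent (n + 1)
  have hb : iterBMExponent n = 2 * b := by simp only [b, iterBMExponent_succ]; ring
  have hGb : Gamma (-b) ≠ 0 := (Gamma_neg_iterBMExponent_lt_zero (n + 1)).ne
  have hG2b : Gamma (-(2 * b)) ≠ 0 := hb ▸ (Gamma_neg_iterBMExponent_lt_zero n).ne
  have hdup : Gamma (1 / 2 - b) = Gamma (-(2 * b)) * 2 ^ (1 + 2 * b) * √π / Gamma (-b) := by
    rw [eq_div_iff hGb, mul_comm]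
    convert Gamma_mul_Gamma_add_half (-b) using 4 <;> ring
  have hpow : (2 : ℝ) ^ ((n : ℝ) - 2 * b) * 2 ^ (-b) * 2 ^ (1 + 2 * b) =
      2 ^ ((n : ℝ) + 1 - b) := by
    rw [← rpow_add two_pos, ← rpow_add two_pos]; ring_nf
  rw [hb, hdup, Nat.cast_succ, ← hpow]
  field_simp

noncomputable def iterBMDensityENN : ℕ → ℝ → ℝ → ℝ≥0∞ :=
  iterKernel ((2 : ℝ≥0∞) • volume.restrict (Ioi 0)) fun x t =>
    ENNReal.ofReal (gaussKernel x t)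

theorem measurable_ofReal_gaussKernel :
    Measurable (uncurry fun x t => ENNReal.ofReal (gaussKernel x t)) :=
  measurable_gaussKernel.ennreal_ofReal

theorem iterBMDensityENN_succ (n : ℕ) (x t : ℝ) :
    iterBMDensityENN (n + 1) x t =
      2 * ∫⁻ w in Ioi 0, ENNReal.ofReal (gaussKernel x w) * iterBMDensityENN n w t := by
  rw [iterBMDensityENN, iterKernel_succ, lintegral_smul_measure, smul_eq_mul]

theorem iterBMDensityENN_succ' (n : ℕ) (x t : ℝ) :
    iterBMDensityENN (n + 1) x t =
      2 * ∫⁻ w in Ioi 0, iterBMDensityENN n x w * ENNReal.ofReal (gaussKernel w t) := by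
  rw [iterBMDensityENN, iterKernel_succ' measurable_ofReal_gaussKernel, lintegral_smul_measure,
    smul_eq_mul]

theorem iterBMDensityENN_zero_left (n : ℕ) {t : ℝ} (ht : 0 < t) :
    iterBMDensityENN n 0 t = ENNReal.ofReal (iterBMConstant n * t ^ (-iterBMExponent n)) := by
  induction n generalizing t with
  | zero =>
    rw [iterBMConstant_zero, iterBMExponent_zero, ← gaussKernel_zero_left ht.le]
    rfl
  | succ n ih =>
    have hs : -1 < -iterBMExponent n := neg_lt_neg (iterBMExponent_lt_one n)
    have hc := iterBMConstant_nonneg n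
    calc iterBMDensityENN (n + 1) 0 t
        = 2 * ∫⁻ w in Ioi 0, ENNReal.ofReal (iterBMConstant n) *
            ENNReal.ofReal (w ^ (-iterBMExponent n) * gaussKernel w t) := by
          rw [iterBMDensityENN_succ']
          congr 1
          refine setLIntegral_congr_fun measurableSet_Ioi fun w hw => ?_
          rw [ih hw, ← ENNReal.ofReal_mul hc, ← ENNReal.ofReal_mul (mul_nonneg hc
            (rpow_nonneg hw.le _)), mul_assoc]
      _ = ENNReal.ofReal (2 * iterBMConstant n * ((2 * t) ^ (-iterBMExponent n / 2) *
            Gamma ((-iterBMExponent n + 1) / 2) / (2 * √π))) := by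
          rw [lintegral_const_mul' _ _ ENNReal.ofReal_ne_top, lintegral_rpow_mul_gaussKernel hs ht,
            ← ENNReal.ofReal_mul hc, ← ENNReal.ofReal_ofNat, ← ENNReal.ofReal_mul zero_le_two,
            mul_assoc]
      _ = ENNReal.ofReal (iterBMConstant (n + 1) * t ^ (-iterBMExponent (n + 1))) := by
          rw [iterBMConstant_succ, iterBMExponent_succ, neg_div,
            show (-iterBMExponent n + 1) / 2 = 1 / 2 - iterBMExponent n / 2 by ring,
            mul_rpow zero_le_two ht.le]
          congr 1
          field_simp

theorem iterBMDensityENN_lt_top (n : ℕ) (x : ℝ) {t : ℝ} (ht : 0 < t) :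
    iterBMDensityENN n x t < ∞ :=
  (iterKernel_mono_left (fun w => ENNReal.ofReal_le_ofReal (gaussKernel_le_gaussKernel_zero x w))
    n t).trans_lt ((iterBMDensityENN_zero_left n ht).trans_lt ENNReal.ofReal_lt_top)

theorem iterBMDensity_eq_toReal (n : ℕ) (x : ℝ) {t : ℝ} (ht : 0 < t) :
    iterBMDensity n x t = (iterBMDensityENN n x t).toReal := by
  induction n generalizing x with
  | zero => exact (ENNReal.toReal_ofReal (gaussKernel_nonneg x t)).symm
  | succ n ih =>
    have hmeas : Measurable fun w => ENNReal.ofReal (gaussKernel x w) * iterBMDensityENN n w t :=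
      (measurable_ofReal_gaussKernel.comp measurable_prodMk_left).mul
        ((measurable_iterKernel measurable_ofReal_gaussKernel n).comp measurable_prodMk_right)
    have hfin : ∀ w, ENNReal.ofReal (gaussKernel x w) * iterBMDensityENN n w t < ∞ := fun w =>
      ENNReal.mul_lt_top ENNReal.ofReal_lt_top (iterBMDensityENN_lt_top n w ht)
    calc iterBMDensity (n + 1) x t
        = 2 * ∫ w in Ioi 0,
            (ENNReal.ofReal (gaussKernel x w) * iterBMDensityENN n w t).toReal := by
          simp only [ENNReal.toReal_mul, ENNReal.toReal_ofReal (gaussKernel_nonneg _ _), ← ih]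
          rfl
      _ = (iterBMDensityENN (n + 1) x t).toReal := by
          rw [integral_toReal hmeas.aemeasurable (.of_forall hfin), iterBMDensityENN_succ,
            ENNReal.toReal_mul, ENNReal.toReal_ofNat]

theorem iterBMDensity_at_zero (n : ℕ) :
    ∀ t : ℝ, 0 < t →
      iterBMDensity n 0 t
        = ((2 : ℝ) ^ ((n : ℝ) - 1 / 2 ^ (n + 1)) / Real.sqrt π) *
            t ^ (-(1 / (2 : ℝ) ^ (n + 1))) *
            (Real.Gamma (-(1 / 2)) / Real.Gamma (-(1 / (2 : ℝ) ^ (n + 1)))) := by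
  intro t ht
  rw [iterBMDensity_eq_toReal n 0 ht, iterBMDensityENN_zero_left n ht,
    ENNReal.toReal_ofReal (mul_nonneg (iterBMConstant_nonneg n) (rpow_nonneg ht.le _)),
    iterBMConstant, iterBMExponent]
  ring
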